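/- arXiv:0808.2762 — 2 statements merged into one kernel-verified Lean document; each statement's English description precedes it below -/
import Mathlib

section
/- For every positive integer n, the sum over all positive integers j with j ≠ n of n/(j(n−j)) equals H_n − 2/n, where H_n is the n-th harmonic number. -/
/-!
Partial fractions give `n / (j (n - j)) = 1 / j + 1 / (n - j)`. For `j < n` both parts sum to
`H (n - 1)`, while each later term `j = n + m + 1` contributes `1 / (n + m + 1) - 1 / (m + 1)`.
Hence the partial sum up to `m + n` is `H n - 2 / n + (H (m + n) - H m)`, and the bracket is a sum
of `n` terms `1 / (m + k + 1)`, each tending to `0`.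
-/

open Filter

/-- The n-th harmonic number `H n = ∑_{j=1}^n 1/j`. -/
noncomputable def H (n : ℕ) : ℝ := ∑ j ∈ Finset.range n, 1 / (j + 1 : ℝ)

open Topology Finset

noncomputable def partialSum (n N : ℕ) : ℝ :=
  ∑ j ∈ (Icc 1 N).erase n, (n : ℝ) / (j * ((n : ℝ) - j))

lemma div_mul_sub_eq_one_div_add_one_div {a b : ℝ} (ha : a ≠ 0) (hab : b - a ≠ 0) :
    b / (a * (b - a)) = 1 / a + 1 / (b - a) := by
  field_simp
  ring

lemma H_succ (n : ℕ) : H (n + 1) = H n + 1 / (n + 1 : ℝ) := by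
  simp [H, sum_range_succ]

lemma H_eq_sum_Ico (n : ℕ) : H n = ∑ j ∈ Ico 1 (n + 1), 1 / (j : ℝ) := by
  rw [sum_Ico_eq_sum_range]
  simp [H, add_comm]

lemma H_add_sub_H (m n : ℕ) : H (m + n) - H m = ∑ k ∈ range n, 1 / ((m + k : ℕ) + 1 : ℝ) := by
  rw [H, H, sum_range_add, add_sub_cancel_left]

lemma tendsto_H_add_sub_H (n : ℕ) : Tendsto (fun m => H (m + n) - H m) atTop (𝓝 0) := by
  simp_rw [H_add_sub_H]
  simpa using tendsto_finsetSum (range n) fun k _ =>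
    (tendsto_one_div_add_atTop_nhds_zero_nat (𝕜 := ℝ)).comp (tendsto_add_atTop_nat k)

lemma partialSum_self {n : ℕ} (hn : 0 < n) : partialSum n n = 2 * H n - 2 / n := by
  have hsplit : ∀ j ∈ Ico 1 n, (n : ℝ) / (j * (n - j)) = 1 / (j : ℝ) + 1 / ((n - j : ℕ) : ℝ) := by
    intro j hj
    obtain ⟨hj1, hjn⟩ := mem_Ico.mp hj
    rw [Nat.cast_sub hjn.le]
    exact div_mul_sub_eq_one_div_add_one_div (by positivity)
      (sub_ne_zero.mpr (by exact_mod_cast hjn.ne'))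
  have hreflect : ∑ j ∈ Ico 1 n, 1 / ((n - j : ℕ) : ℝ) = ∑ j ∈ Ico 1 n, 1 / (j : ℝ) := by
    rw [sum_Ico_reflect (fun j : ℕ => 1 / (j : ℝ)) 1 (by omega)]
    simp
  rw [partialSum, Icc_erase_right, sum_congr rfl hsplit, sum_add_distrib, hreflect,
    H_eq_sum_Ico, sum_Ico_succ_top hn]
  ring

lemma partialSum_succ {n N : ℕ} (h : N + 1 ≠ n) :
    partialSum n (N + 1) = partialSum n N + (1 / (N + 1 : ℝ) + 1 / (n - (N + 1 : ℝ))) := by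
  have hinsert : (Icc 1 (N + 1)).erase n = insert (N + 1) ((Icc 1 N).erase n) := by
    ext j
    simp only [mem_erase, mem_Icc, mem_insert]
    omega
  rw [partialSum, partialSum, hinsert, sum_insert (by simp), add_comm]
  push_cast
  rw [div_mul_sub_eq_one_div_add_one_div (by positivity)
    (sub_ne_zero.mpr (by exact_mod_cast h.symm))]

lemma partialSum_add {n : ℕ} (hn : 0 < n) (m : ℕ) :
    partialSum n (m + n) = H n - 2 / n + (H (m + n) - H m) := by
  induction m with
  | zero =>
    rw [zero_add, partialSum_self hn, show H 0 = 0 from sum_range_zero _]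
    ring
  | succ m ih =>
    have hneg : (n : ℝ) - ((m + n : ℕ) + 1) = -(m + 1) := by
      push_cast
      ring
    rw [add_right_comm, partialSum_succ (by omega), ih, hneg, div_neg, H_succ, H_succ]
    push_cast
    ring

/-- For every positive integer `n`, the series `∑_{j ≥ 1, j ≠ n} n/(j(n−j))`,
interpreted as the limit of the partial sums `∑_{j=1, j≠n}^N`, equals `H n − 2/n`. -/
theorem stmt1 (n : ℕ) (hn : 0 < n) :
    Tendsto (fun N : ℕ => ∑ j ∈ (Finset.Icc 1 N).erase n,
      (n : ℝ) / (j * ((n : ℝ) - j))) atTop (nhds (H n - 2 / n)) := by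
  have h : Tendsto (fun m => partialSum n (m + n)) atTop (𝓝 (H n - 2 / n)) := by
    simpa [partialSum_add hn] using (tendsto_H_add_sub_H n).const_add (H n - 2 / n)
  exact (tendsto_add_atTop_iff_nat n).mp h
end

section
/- The sum over n ≥ 1 of H_{n−1,4}/n^2 equals (22/3)ζ(6) − 3ζ(2)ζ(4) − ζ(3)^2, where H_{n−1,4} = ∑_{j=1}^{n−1} 1/j^4. -/
/-!
The left-hand side is the double zeta value `ζ(2,4) = ∑_{m > n ≥ 1} m⁻² n⁻⁴`. Summing Euler's
partial fraction decompositions of `1/(x³y³)` and `1/(x²y⁴)` into terms `1/((x+y)^(6-k) x^k)` and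
`1/((x+y)^(6-k) y^k)` over `x, y ≥ 1` expresses `ζ(3)²` and `ζ(2)ζ(4)` through
`ζ(5,1), ζ(4,2), ζ(3,3), ζ(2,4)`. Splitting the double series of `ζ(3)²` along the diagonal gives
`ζ(3)² = 2ζ(3,3) + ζ(6)`, and the closed forms of `ζ(2), ζ(4), ζ(6)` give `ζ(2)ζ(4) = 7/4 ζ(6)`.
Eliminating `ζ(5,1), ζ(4,2), ζ(3,3)` from these four relations leaves the value of `ζ(2,4)`.
-/

/-- Generalized harmonic number `H_{n,4} = ∑_{j=1}^n 1/j^4`. -/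
noncomputable def H4 (n : ℕ) : ℝ := ∑ j ∈ Finset.range n, 1 / ((j + 1 : ℝ)) ^ 4

/-- `ζ(r) = ∑_{n ≥ 1} 1/n^r`. -/
noncomputable def zetaR (r : ℕ) : ℝ := ∑' n : ℕ, 1 / ((n + 1 : ℝ)) ^ r

open Finset Real

lemma hasSum_zetaR {r : ℕ} (hr : 2 ≤ r) :
    HasSum (fun n : ℕ => 1 / ((n + 1 : ℝ)) ^ r) (zetaR r) := by
  have h := (summable_nat_add_iff 1).2 (summable_one_div_nat_pow.2 hr)
  exact (h.congr fun n => by push_cast; rfl).hasSum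

lemma zetaR_eq_of_hasSum {r : ℕ} (hr : r ≠ 0) {c : ℝ}
    (h : HasSum (fun n : ℕ => 1 / (n : ℝ) ^ r) c) : zetaR r = c := by
  simpa [zetaR, zero_pow hr] using ((hasSum_nat_add_iff' 1).2 h).tsum_eq

lemma bernoulli_six : bernoulli 6 = 1 / 42 := by
  have h5 : bernoulli' 5 = 0 := by
    rw [bernoulli'_def]
    norm_num [sum_range_succ, show Nat.choose 5 2 = 10 by decide]
  rw [bernoulli_eq_bernoulli'_of_ne_one (by decide), bernoulli'_def]
  norm_num [sum_range_succ, h5, show Nat.choose 6 2 = 15 by decide,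
    show Nat.choose 6 3 = 20 by decide, show Nat.choose 6 4 = 15 by decide]

lemma zetaR_two : zetaR 2 = π ^ 2 / 6 := zetaR_eq_of_hasSum two_ne_zero hasSum_zeta_two

lemma zetaR_four : zetaR 4 = π ^ 4 / 90 := zetaR_eq_of_hasSum four_ne_zero hasSum_zeta_four

lemma zetaR_six : zetaR 6 = π ^ 6 / 945 := by
  refine zetaR_eq_of_hasSum (by norm_num) ?_
  convert hasSum_zeta_nat (k := 3) (by norm_num) using 1
  rw [bernoulli_six]
  norm_num [Nat.factorial]
  ring

lemma hasSum_zetaR_mul_zetaR {s t : ℕ} (hs : 2 ≤ s) (ht : 2 ≤ t) :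
    HasSum (fun p : ℕ × ℕ => 1 / ((p.1 + 1 : ℝ) ^ s * (p.2 + 1 : ℝ) ^ t))
      (zetaR s * zetaR t) := by
  have h := (hasSum_zetaR hs).mul (hasSum_zetaR ht)
    ((hasSum_zetaR hs).summable.mul_of_nonneg (hasSum_zetaR ht).summable
      (fun _ => by positivity) (fun _ => by positivity))
  simpa only [div_mul_div_comm, one_mul] using h

lemma hasSum_ite_snd_lt_fst_iff {M : Type*} [AddCommMonoid M] [TopologicalSpace M]
    {f : ℕ × ℕ → M} {a : M} :
    HasSum (fun p : ℕ × ℕ => if p.2 < p.1 then f p else 0) a ↔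
      HasSum (fun p : ℕ × ℕ => f (p.1 + p.2 + 1, p.1)) a := by
  have hinj : Function.Injective fun p : ℕ × ℕ => (p.1 + p.2 + 1, p.1) := by
    intro p q h
    simp only [Prod.mk.injEq] at h
    ext <;> omega
  refine (hinj.hasSum_iff fun p hp => ?_).symm.trans (by simp [Function.comp_def])
  rw [if_neg]
  intro h
  exact hp ⟨(p.2, p.1 - p.2 - 1), by ext <;> simp; omega⟩

lemma hasSum_ite_fst_eq_snd_iff {M : Type*} [AddCommMonoid M] [TopologicalSpace M]
    {f : ℕ × ℕ → M} {a : M} :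
    HasSum (fun p : ℕ × ℕ => if p.1 = p.2 then f p else 0) a ↔
      HasSum (fun n : ℕ => f (n, n)) a := by
  have hinj : Function.Injective fun n : ℕ => (n, n) := fun m n h => congrArg Prod.fst h
  refine (hinj.hasSum_iff fun p hp => ?_).symm.trans (by simp [Function.comp_def])
  rw [if_neg]
  intro h
  exact hp ⟨p.1, by ext <;> simp [h]⟩

noncomputable def doubleZetaTerm (s t : ℕ) (x y : ℝ) : ℝ := 1 / ((x + y) ^ s * x ^ t)

/-- `ζ(s,t) = ∑_{m > n ≥ 1} m⁻ˢ n⁻ᵗ`, summed over `n = x`, `m = x + y` with `x, y ≥ 1`. -/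
noncomputable def doubleZeta (s t : ℕ) : ℝ :=
  ∑' p : ℕ × ℕ, doubleZetaTerm s t (p.1 + 1) (p.2 + 1)

lemma doubleZetaTerm_le {s : ℕ} (t : ℕ) (hs : 2 ≤ s) {x y : ℝ} (hx : 1 ≤ x) (hy : 1 ≤ y) :
    doubleZetaTerm s t x y ≤ 1 / (x ^ (s + t - 2) * y ^ 2) := by
  have hxy : x ^ (s - 2) * y ^ 2 ≤ (x + y) ^ (s - 2) * (x + y) ^ 2 := by
    gcongr <;> linarith
  have hpow : x ^ (s + t - 2) * y ^ 2 ≤ (x + y) ^ s * x ^ t := by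
    calc x ^ (s + t - 2) * y ^ 2 = x ^ (s - 2) * y ^ 2 * x ^ t := by
          rw [show s + t - 2 = s - 2 + t by omega, pow_add]; ring
      _ ≤ (x + y) ^ (s - 2) * (x + y) ^ 2 * x ^ t := by gcongr
      _ = (x + y) ^ s * x ^ t := by rw [← pow_add, Nat.sub_add_cancel hs]
  exact one_div_le_one_div_of_le (by positivity) hpow

lemma hasSum_doubleZeta {s t : ℕ} (hs : 2 ≤ s) (hst : 4 ≤ s + t) :
    HasSum (fun p : ℕ × ℕ => doubleZetaTerm s t (p.1 + 1) (p.2 + 1)) (doubleZeta s t) :=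
  (Summable.of_nonneg_of_le (fun _ => by rw [doubleZetaTerm]; positivity)
    (fun _ => doubleZetaTerm_le t hs (by simp) (by simp))
    (hasSum_zetaR_mul_zetaR (by omega) le_rfl).summable).hasSum

lemma hasSum_doubleZeta_swap {s t : ℕ} (hs : 2 ≤ s) (hst : 4 ≤ s + t) :
    HasSum (fun p : ℕ × ℕ => doubleZetaTerm s t (p.2 + 1) (p.1 + 1)) (doubleZeta s t) :=
  (Equiv.prodComm ℕ ℕ).hasSum_iff.2 (hasSum_doubleZeta hs hst)

lemma hasSum_doubleZeta_lowerTriangle {s t : ℕ} (hs : 2 ≤ s) (hst : 4 ≤ s + t) :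
    HasSum (fun p : ℕ × ℕ =>
      if p.2 < p.1 then 1 / ((p.1 + 1 : ℝ) ^ s * (p.2 + 1 : ℝ) ^ t) else 0) (doubleZeta s t) := by
  refine hasSum_ite_snd_lt_fst_iff.2 ((hasSum_doubleZeta hs hst).congr_fun fun p => ?_)
  simp only [doubleZetaTerm]
  push_cast
  ring_nf

lemma hasSum_sum_range_div_pow {s t : ℕ} (hs : 2 ≤ s) (hst : 4 ≤ s + t) :
    HasSum (fun n : ℕ => (∑ j ∈ range n, 1 / ((j + 1 : ℝ)) ^ t) / ((n + 1 : ℝ)) ^ s)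
      (doubleZeta s t) := by
  refine (hasSum_doubleZeta_lowerTriangle hs hst).prod_fiberwise fun n => ?_
  have hrow : HasSum (fun j : ℕ => if j < n then 1 / ((n + 1 : ℝ) ^ s * (j + 1 : ℝ) ^ t) else 0)
      (∑ j ∈ range n, if j < n then 1 / ((n + 1 : ℝ) ^ s * (j + 1 : ℝ) ^ t) else 0) :=
    hasSum_sum_of_ne_finset_zero fun j hj => if_neg (by simpa using hj)
  convert hrow using 1
  rw [sum_div]
  refine sum_congr rfl fun j hj => ?_
  rw [if_pos (by simpa using hj), div_div, mul_comm]

theorem zetaR_mul_zetaR {s t : ℕ} (hs : 2 ≤ s) (ht : 2 ≤ t) :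
    zetaR s * zetaR t = doubleZeta s t + doubleZeta t s + zetaR (s + t) := by
  have hlower := hasSum_doubleZeta_lowerTriangle hs (by omega : 4 ≤ s + t)
  have hupper : HasSum (fun p : ℕ × ℕ =>
      if p.1 < p.2 then 1 / ((p.1 + 1 : ℝ) ^ s * (p.2 + 1 : ℝ) ^ t) else 0) (doubleZeta t s) := by
    refine (Equiv.prodComm ℕ ℕ).hasSum_iff.1 ?_
    convert hasSum_doubleZeta_lowerTriangle ht (by omega : 4 ≤ t + s) using 2 with p
    simp [mul_comm]
  have hdiag : HasSum (fun p : ℕ × ℕ =>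
      if p.1 = p.2 then 1 / ((p.1 + 1 : ℝ) ^ s * (p.2 + 1 : ℝ) ^ t) else 0) (zetaR (s + t)) :=
    hasSum_ite_fst_eq_snd_iff.2 (by simpa [← pow_add] using hasSum_zetaR (by omega : 2 ≤ s + t))
  refine (hasSum_zetaR_mul_zetaR hs ht).unique
    ((hlower.add hupper).add hdiag |>.congr_fun fun p => ?_)
  split_ifs <;> first | omega | ring

theorem zetaR_mul_zetaR_eq_sum_of_partialFraction {a b : ℕ} (ha : 2 ≤ a) (hb : 2 ≤ b)
    (S T : Finset ℕ) (c d : ℕ → ℝ) (hS : ∀ k ∈ S, k + 2 ≤ a + b) (hT : ∀ k ∈ T, k + 2 ≤ a + b)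
    (hpf : ∀ x y : ℝ, 0 < x → 0 < y → 1 / (x ^ a * y ^ b) =
      ∑ k ∈ S, c k * doubleZetaTerm (a + b - k) k x y +
        ∑ k ∈ T, d k * doubleZetaTerm (a + b - k) k y x) :
    zetaR a * zetaR b =
      ∑ k ∈ S, c k * doubleZeta (a + b - k) k + ∑ k ∈ T, d k * doubleZeta (a + b - k) k := by
  have hx : HasSum
      (fun p : ℕ × ℕ => ∑ k ∈ S, c k * doubleZetaTerm (a + b - k) k (p.1 + 1) (p.2 + 1))
      (∑ k ∈ S, c k * doubleZeta (a + b - k) k) := hasSum_sum fun k hk =>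
    (hasSum_doubleZeta (by have := hS k hk; omega) (by omega)).mul_left (c k)
  have hy : HasSum
      (fun p : ℕ × ℕ => ∑ k ∈ T, d k * doubleZetaTerm (a + b - k) k (p.2 + 1) (p.1 + 1))
      (∑ k ∈ T, d k * doubleZeta (a + b - k) k) := hasSum_sum fun k hk =>
    (hasSum_doubleZeta_swap (by have := hT k hk; omega) (by omega)).mul_left (d k)
  exact (hasSum_zetaR_mul_zetaR ha hb).unique
    ((hx.add hy).congr_fun fun p => hpf (p.1 + 1) (p.2 + 1) (by positivity) (by positivity))

-- Euler: the coefficient of `1 / ((x+y)^(a+b-k) x^k)` in `1 / (x^a y^b)` is `C(a+b-k-1, b-1)`,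
-- and symmetrically in `y`.
lemma one_div_pow_three_mul_pow_three {x y : ℝ} (hx : 0 < x) (hy : 0 < y) :
    1 / (x ^ 3 * y ^ 3) =
      6 * doubleZetaTerm 5 1 x y + 3 * doubleZetaTerm 4 2 x y + doubleZetaTerm 3 3 x y +
        (6 * doubleZetaTerm 5 1 y x + 3 * doubleZetaTerm 4 2 y x + doubleZetaTerm 3 3 y x) := by
  simp only [doubleZetaTerm]
  field_simp
  ring

lemma one_div_sq_mul_pow_four {x y : ℝ} (hx : 0 < x) (hy : 0 < y) :
    1 / (x ^ 2 * y ^ 4) =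
      4 * doubleZetaTerm 5 1 x y + doubleZetaTerm 4 2 x y +
        (4 * doubleZetaTerm 5 1 y x + 3 * doubleZetaTerm 4 2 y x + 2 * doubleZetaTerm 3 3 y x +
          doubleZetaTerm 2 4 y x) := by
  simp only [doubleZetaTerm]
  field_simp
  ring

lemma zetaR_three_mul_zetaR_three :
    zetaR 3 * zetaR 3 =
      6 * doubleZeta 5 1 + 3 * doubleZeta 4 2 + doubleZeta 3 3 +
        (6 * doubleZeta 5 1 + 3 * doubleZeta 4 2 + doubleZeta 3 3) := by
  rw [zetaR_mul_zetaR_eq_sum_of_partialFraction (a := 3) (b := 3) (by norm_num) (by norm_num)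
    (Icc 1 3) (Icc 1 3) (fun k => ((5 - k).choose 2 : ℝ)) (fun k => ((5 - k).choose 2 : ℝ))
    (fun k hk => by rw [mem_Icc] at hk; omega) (fun k hk => by rw [mem_Icc] at hk; omega)
    fun x y hx hy => by
      rw [one_div_pow_three_mul_pow_three hx hy]
      norm_num [sum_Icc_succ_top, Nat.choose]]
  norm_num [sum_Icc_succ_top, Nat.choose]

lemma zetaR_two_mul_zetaR_four :
    zetaR 2 * zetaR 4 =
      4 * doubleZeta 5 1 + doubleZeta 4 2 +
        (4 * doubleZeta 5 1 + 3 * doubleZeta 4 2 + 2 * doubleZeta 3 3 + doubleZeta 2 4) := by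
  rw [zetaR_mul_zetaR_eq_sum_of_partialFraction (a := 2) (b := 4) (by norm_num) (by norm_num)
    (Icc 1 2) (Icc 1 4) (fun k => ((5 - k).choose 3 : ℝ)) (fun k => ((5 - k).choose 1 : ℝ))
    (fun k hk => by rw [mem_Icc] at hk; omega) (fun k hk => by rw [mem_Icc] at hk; omega)
    fun x y hx hy => by
      rw [one_div_sq_mul_pow_four hx hy]
      norm_num [sum_Icc_succ_top, Nat.choose]]
  norm_num [sum_Icc_succ_top, Nat.choose]

/-- `∑_{n≥1} H_{n−1,4}/n^2 = (22/3)ζ(6) − 3ζ(2)ζ(4) − ζ(3)^2`. -/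
theorem stmt5 :
    ∑' n : ℕ, H4 n / ((n + 1 : ℝ)) ^ 2 =
      22 / 3 * zetaR 6 - 3 * zetaR 2 * zetaR 4 - zetaR 3 ^ 2 := by
  have hlhs : ∑' n : ℕ, H4 n / ((n + 1 : ℝ)) ^ 2 = doubleZeta 2 4 :=
    (hasSum_sum_range_div_pow le_rfl (by norm_num)).tsum_eq
  have hstuffle : zetaR 3 * zetaR 3 = 2 * doubleZeta 3 3 + zetaR 6 := by
    rw [zetaR_mul_zetaR (by norm_num) (by norm_num)]
    ring
  have hshuffle₃₃ := zetaR_three_mul_zetaR_three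
  have hshuffle₂₄ := zetaR_two_mul_zetaR_four
  have heven : zetaR 2 * zetaR 4 = 7 / 4 * zetaR 6 := by
    rw [zetaR_two, zetaR_four, zetaR_six]
    ring
  rw [hlhs]
  linarith
end
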